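/- For nonnegative integers n, N with n ≥ 1, any complex a, and complex x: ∑_{k=0}^{n+N} [(-n-N)_k (a)_k (-N+1+k)_{n+N-k} / k!] x^k = (N+1)_n (a)_N (-x)^N ∑_{k=0}^{n} [(-n)_k (a+N)_k / ((N+1)_k k!)] x^k. In particular, the left-hand polynomial is divisible by x^N. -/

import Mathlib

/-!
For `k < N` the regularizing factor `(-N+1+k)_{n+N-k}` runs through `0`, so the first `N`
coefficients vanish. Writing the remaining indices as `k = N + j`, the Pochhammer symbols split
as `(b)_{N+j} = (b)_N (b+N)_j`, and every symbol with an integer argument that is left over is a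
ratio of factorials; the identity then holds term by term.
-/

open Polynomial Finset

/-- Pochhammer (shifted factorial) symbol `(a)_k = a(a+1)⋯(a+k-1)`. -/
noncomputable def poch (a : ℂ) (k : ℕ) : ℂ := (ascPochhammer ℂ k).eval a

open scoped Nat

lemma poch_add (a : ℂ) (m k : ℕ) : poch a (m + k) = poch a m * poch (a + m) k := by
  simp [poch, ← ascPochhammer_mul, eval_comp]

lemma poch_neg_natCast_of_lt {m k : ℕ} (h : m < k) : poch (-m) k = 0 :=
  ascPochhammer_eval_neg_coe_nat_of_lt h

lemma poch_natCast_add_one (c m : ℕ) : poch (c + 1) m = (c + m)! / c ! := by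
  rw [eq_div_iff (Nat.cast_ne_zero.mpr (Nat.factorial_ne_zero _)), poch, ← Nat.cast_add_one,
    ascPochhammer_nat_eq_natCast_ascFactorial, ← Nat.factorial_mul_ascFactorial c m]
  push_cast
  ring

lemma poch_neg_natCast {m j : ℕ} (h : j ≤ m) : poch (-m) j = (-1) ^ j * m ! / (m - j)! := by
  rw [eq_div_iff (Nat.cast_ne_zero.mpr (Nat.factorial_ne_zero _)), poch,
    ascPochhammer_eval_neg_eq_descPochhammer, descPochhammer_eval_eq_descFactorial,
    ← Nat.factorial_mul_descFactorial h]
  push_cast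
  ring

lemma poch_neg_natCast_add_one_add_eq_zero {N k m : ℕ} (hk : k < N) (hm : N - k ≤ m) :
    poch (-(N : ℂ) + 1 + k) m = 0 := by
  have harg : -(N : ℂ) + 1 + k = -((N - 1 - k : ℕ) : ℂ) := by
    rw [Nat.cast_sub (by omega), Nat.cast_sub (by omega)]
    push_cast
    ring
  rw [harg]
  exact poch_neg_natCast_of_lt (by omega)

lemma regularized_term_add (n N j : ℕ) (hj : j ≤ n) (a x : ℂ) :
    poch (-(n : ℂ) - N) (N + j) * poch a (N + j)
        * poch (-(N : ℂ) + 1 + (N + j : ℕ)) (n + N - (N + j)) / ((N + j)! : ℂ) * x ^ (N + j)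
      = poch ((N : ℂ) + 1) n * poch a N * (-x) ^ N
        * (poch (-(n : ℂ)) j * poch (a + N) j / (poch ((N : ℂ) + 1) j * j !) * x ^ j) := by
  have hsplit : poch (-(n : ℂ) - N) (N + j) = poch (-((n + N : ℕ) : ℂ)) N * poch (-(n : ℂ)) j := by
    rw [show -(n : ℂ) - N = -((n + N : ℕ) : ℂ) by push_cast; ring, poch_add,
      show -((n + N : ℕ) : ℂ) + N = -n by push_cast; ring]
  have harg : -(N : ℂ) + 1 + (N + j : ℕ) = j + 1 := by push_cast; ring
  rw [hsplit, poch_add a, harg, show n + N - (N + j) = n - j by omega,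
    poch_neg_natCast (by omega), poch_natCast_add_one, poch_natCast_add_one, poch_natCast_add_one,
    show n + N - N = n by omega, show j + (n - j) = n by omega, pow_add, neg_pow x, add_comm N n]
  field_simp [Nat.cast_ne_zero.mpr (Nat.factorial_ne_zero _)]

theorem regularized_2F1_factorization_general (n N : ℕ) (a x : ℂ) :
    ∑ k ∈ Finset.range (n + N + 1),
      poch (-(n : ℂ) - N) k * poch a k * poch (-(N : ℂ) + 1 + k) (n + N - k)
        / (k.factorial : ℂ) * x ^ k
    = poch ((N : ℂ) + 1) n * poch a N * (-x) ^ N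
      * ∑ k ∈ Finset.range (n + 1),
          poch (-(n : ℂ)) k * poch (a + N) k
            / (poch ((N : ℂ) + 1) k * (k.factorial : ℂ)) * x ^ k := by
  rw [range_eq_Ico, ← sum_Ico_consecutive _ N.zero_le (by omega : N ≤ n + N + 1),
    sum_eq_zero fun k hk => ?low, zero_add, sum_Ico_eq_sum_range,
    show n + N + 1 - N = n + 1 by omega, mul_sum]
  · exact sum_congr rfl fun j hj =>
      regularized_term_add n N j (Nat.lt_succ_iff.mp (mem_range.mp hj)) a x
  case low =>
    rw [poch_neg_natCast_add_one_add_eq_zero (mem_Ico.mp hk).2 (by omega)]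
    simp

/-- The termwise-regularized product `(-N+1)_{n+N} ₂F₁(-n-N, a; -N+1; x)` equals
`(N+1)_n (a)_N (-x)^N ₂F₁(-n, a+N; N+1; x)`; in particular it is divisible by `x^N`. -/
theorem regularized_2F1_factorization (n N : ℕ) (hn : 1 ≤ n) (a x : ℂ) :
    ∑ k ∈ Finset.range (n + N + 1),
      poch (-(n : ℂ) - N) k * poch a k * poch (-(N : ℂ) + 1 + k) (n + N - k)
        / (k.factorial : ℂ) * x ^ k
    = poch ((N : ℂ) + 1) n * poch a N * (-x) ^ N
      * ∑ k ∈ Finset.range (n + 1),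
          poch (-(n : ℂ)) k * poch (a + N) k
            / (poch ((N : ℂ) + 1) k * (k.factorial : ℂ)) * x ^ k :=
  regularized_2F1_factorization_general n N a x
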